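/- For every integer n ≥ 4, the automorphism group Aut(Γ(n)) has exactly 6·n²·φ(n) elements, where φ is Euler's totient function. -/

import Mathlib

/-- The connection set `S = {(i,0), (0,i), (i,i) : 1 ≤ i ≤ n-1}` of `ℤ_n × ℤ_n`. -/
def cayS (n : ℕ) : Set (ZMod n × ZMod n) :=
  {p | p ≠ 0 ∧ (p.2 = 0 ∨ p.1 = 0 ∨ p.1 = p.2)}

/-- The Cayley graph `Γ(n) = Cay(ℤ_n × ℤ_n; S)`. -/
def Gamma (n : ℕ) : SimpleGraph (ZMod n × ZMod n) where
  Adj x y := x ≠ y ∧ x - y ∈ cayS n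
  symm := by
    constructor
    rintro x y ⟨hxy, hne, h⟩
    refine ⟨Ne.symm hxy, sub_ne_zero_of_ne (Ne.symm hxy), ?_⟩
    simp only [Prod.fst_sub, Prod.snd_sub] at h ⊢
    rcases h with h | h | h
    · exact Or.inl (by linear_combination -h)
    · exact Or.inr (Or.inl (by linear_combination -h))
    · exact Or.inr (Or.inr (by linear_combination -h))
  loopless := ⟨fun x h => h.1 rfl⟩

/-! `Γ(n)` is the collinearity graph of the lines `x + ℤ_n v` of the three parallel classes
`v ∈ {(1,0), (0,1), (1,1)}`. For `n ≥ 4` an automorphism maps every line through a point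
into a line through its image (the only other `n`-cliques through a point occur for `n = 4`
and are ruled out by looking at two lines at once), hence lines onto lines, and parallel
lines onto parallel lines, because lines of different directions always meet. So the
automorphism permutes the three parallel classes. After a translation and one of the six
linear maps permuting the classes, it fixes `0` and every class; it is then of the form
`(a, b) ↦ (α a, α b)` with `α` additive and bijective, i.e. multiplication by a unit.
Hence the automorphisms are exactly the maps `p ↦ u • A p + c`, with `n² · φ(n) · 6` choices
of `(c, u, A)`. -/

namespace Gamma

open Function Set

variable {n : ℕ}

/-- The diagonal is spanned by `(-1, -1)` rather than `(1, 1)` so that the three vectors sum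
to `0`; every permutation of them then extends to a linear map (`dirPerm`). -/
def dirVec : Fin 3 → ZMod n × ZMod n := ![(1, 0), (0, 1), (-1, -1)]

def dir (i : Fin 3) : Submodule (ZMod n) (ZMod n × ZMod n) := Submodule.span (ZMod n) {dirVec i}

lemma mem_dir_iff {i : Fin 3} {p : ZMod n × ZMod n} :
    p ∈ dir i ↔ ∃ a : ZMod n, a • dirVec i = p :=
  Submodule.mem_span_singleton

@[simp] lemma mem_dir_zero {p : ZMod n × ZMod n} : p ∈ dir 0 ↔ p.2 = 0 := by
  simp [dir, dirVec, Submodule.mem_span_singleton, Prod.ext_iff, eq_comm]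

@[simp] lemma mem_dir_one {p : ZMod n × ZMod n} : p ∈ dir 1 ↔ p.1 = 0 := by
  simp [dir, dirVec, Submodule.mem_span_singleton, Prod.ext_iff, eq_comm]

@[simp] lemma mem_dir_two {p : ZMod n × ZMod n} : p ∈ dir 2 ↔ p.1 = p.2 := by
  simp only [dir, dirVec, Submodule.mem_span_singleton, Prod.ext_iff]
  constructor
  · rintro ⟨a, h1, h2⟩
    simp_all
  · intro h
    exact ⟨-p.1, by simp [h]⟩

lemma dirVec_mem_dir (i : Fin 3) : dirVec i ∈ dir (n := n) i :=
  Submodule.mem_span_singleton_self _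

lemma exists_mem_dir_iff {p : ZMod n × ZMod n} :
    (∃ i, p ∈ dir i) ↔ p.2 = 0 ∨ p.1 = 0 ∨ p.1 = p.2 := by
  simp [Fin.exists_fin_succ]

lemma eq_zero_of_mem_dir_of_mem_dir {i j : Fin 3} {p : ZMod n × ZMod n} (hij : i ≠ j)
    (hi : p ∈ dir i) (hj : p ∈ dir j) : p = 0 := by
  fin_cases i <;> fin_cases j <;> simp_all [Prod.ext_iff]

lemma exists_add_of_ne {i j : Fin 3} (hij : i ≠ j) (v : ZMod n × ZMod n) :
    ∃ p ∈ dir i, ∃ q ∈ dir j, p + q = v := by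
  fin_cases i <;> fin_cases j <;> simp at hij
  · exact ⟨(v.1, 0), by simp, (0, v.2), by simp, by simp⟩
  · exact ⟨(v.1 - v.2, 0), by simp, (v.2, v.2), by simp, by simp⟩
  · exact ⟨(0, v.2), by simp, (v.1, 0), by simp, by simp⟩
  · exact ⟨(0, v.2 - v.1), by simp, (v.1, v.1), by simp, by simp⟩
  · exact ⟨(v.2, v.2), by simp, (v.1 - v.2, 0), by simp, by simp⟩
  · exact ⟨(v.1, v.1), by simp, (0, v.2 - v.1), by simp, by simp⟩

lemma smul_dirVec_injective (i : Fin 3) :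
    Injective fun a : ZMod n => a • dirVec (n := n) i := by
  intro a b h
  fin_cases i <;> simpa [dirVec, Prod.ext_iff] using h

lemma dirVec_ne_zero [Nontrivial (ZMod n)] (i : Fin 3) : dirVec (n := n) i ≠ 0 := by
  simpa using (smul_dirVec_injective (n := n) i).ne one_ne_zero

lemma adj_iff {x y : ZMod n × ZMod n} : (Gamma n).Adj x y ↔ x ≠ y ∧ ∃ i, x - y ∈ dir i := by
  rw [exists_mem_dir_iff]
  exact and_congr_right fun hxy => and_iff_right (sub_ne_zero_of_ne hxy)

lemma exists_mem_dir_sub_iff (e : Gamma n ≃g Gamma n) (x y : ZMod n × ZMod n) :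
    (∃ i, e x - e y ∈ dir i) ↔ ∃ i, x - y ∈ dir i := by
  rcases eq_or_ne x y with rfl | hxy
  · simp
  · have := e.map_adj_iff (v := x) (w := y)
    rw [adj_iff, adj_iff, Ne, e.injective.eq_iff] at this
    exact and_congr_right_iff.mp this hxy

/-- Otherwise two of the three edges from `z` to `0`, `p`, `q` would share a direction,
forcing two of these points to coincide. -/
lemma mem_dir_of_sub_mem_dir {j : Fin 3} {p q z : ZMod n × ZMod n} (hp : p ∈ dir j)
    (hq : q ∈ dir j) (hp0 : p ≠ 0) (hq0 : q ≠ 0) (hpq : p ≠ q) (hz : ∃ k, z ∈ dir k)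
    (hzp : ∃ k, z - p ∈ dir k) (hzq : ∃ k, z - q ∈ dir k) : z ∈ dir j := by
  obtain ⟨k₀, hk₀⟩ := hz
  obtain ⟨k₁, hk₁⟩ := hzp
  obtain ⟨k₂, hk₂⟩ := hzq
  by_contra hzj
  have h₀ : k₀ ≠ j := by rintro rfl; exact hzj hk₀
  have h₁ : k₁ ≠ j := by rintro rfl; exact hzj (by simpa using add_mem hk₁ hp)
  have h₂ : k₂ ≠ j := by rintro rfl; exact hzj (by simpa using add_mem hk₂ hq)
  have pigeonhole : k₀ = k₁ ∨ k₀ = k₂ ∨ k₁ = k₂ := by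
    have : ∀ a b c d : Fin 3, a ≠ d → b ≠ d → c ≠ d → a = b ∨ a = c ∨ b = c := by decide
    exact this _ _ _ _ h₀ h₁ h₂
  rcases pigeonhole with rfl | rfl | rfl
  · exact hp0 (eq_zero_of_mem_dir_of_mem_dir h₀ (by simpa using sub_mem hk₀ hk₁) hp)
  · exact hq0 (eq_zero_of_mem_dir_of_mem_dir h₀ (by simpa using sub_mem hk₀ hk₂) hq)
  · exact sub_ne_zero_of_ne hpq
      (eq_zero_of_mem_dir_of_mem_dir h₁ (by simpa using sub_mem hk₂ hk₁) (sub_mem hp hq))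

lemma exists_eq_smul_of_triangle {p : Fin 3 → ZMod n × ZMod n} (hp : ∀ j, p j ∈ dir j)
    (hp0 : ∀ j, p j ≠ 0) (hadj : ∀ j k, ∃ l, p j - p k ∈ dir l) :
    ∃ t : ZMod n, t ≠ 0 ∧ t + t = 0 ∧ ∀ j, p j = t • dirVec j := by
  obtain ⟨a, b, c, e₀, e₁, e₂⟩ : ∃ a b c, p 0 = (a, 0) ∧ p 1 = (0, b) ∧ p 2 = (c, c) :=
    ⟨_, _, _, Prod.ext rfl (by simpa using hp 0), Prod.ext (by simpa using hp 1) rfl,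
      Prod.ext rfl (mem_dir_two.mp (hp 2)).symm⟩
  have ha : a ≠ 0 := fun h => hp0 0 (by simp [e₀, h])
  have hb : b ≠ 0 := fun h => hp0 1 (by simp [e₁, h])
  have hc : c ≠ 0 := fun h => hp0 2 (by simp [e₂, h])
  have h₀₁ := exists_mem_dir_iff.mp (hadj 0 1)
  have h₀₂ := exists_mem_dir_iff.mp (hadj 0 2)
  have h₁₂ := exists_mem_dir_iff.mp (hadj 1 2)
  simp only [e₀, e₁, e₂, Prod.mk_sub_mk, sub_zero, zero_sub, neg_eq_zero] at h₀₁ h₀₂ h₁₂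
  have hca : c = a := by
    rcases h₀₂ with h | h | h
    exacts [absurd h hc, (sub_eq_zero.mp h).symm, absurd (by linear_combination h) ha]
  have hbc : b = c := by
    rcases h₁₂ with h | h | h
    exacts [sub_eq_zero.mp h, absurd h hc, absurd (by linear_combination -h) hb]
  subst c b
  have hneg : a = -a := by
    rcases h₀₁ with h | h | h
    exacts [absurd h ha, absurd h ha, h]
  refine ⟨a, ha, by linear_combination hneg, fun j => ?_⟩
  fin_cases j <;> ext <;> simp [e₀, e₁, e₂, dirVec] <;> linear_combination hneg

lemma exists_eq_smul_of_forall_mem_dir [NeZero n] {y : ZMod n → ZMod n × ZMod n}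
    (hy : Injective y) {j : Fin 3} (hj : ∀ a, y a ∈ dir j) (t : ZMod n) :
    ∃ a, y a = t • dirVec j := by
  choose c hc using fun a => mem_dir_iff.mp (hj a)
  have hc_inj : Injective c := fun a b h => hy (by rw [← hc a, ← hc b, h])
  obtain ⟨a, rfl⟩ := Finite.injective_iff_surjective.mp hc_inj t
  exact ⟨a, (hc a).symm⟩

/-- The second alternative only occurs for `n = 4`, where `{0, 2 • dirVec j}` is a clique
of size `4` on no line. -/
lemma forall_mem_dir_or_two_smul (hn : 4 ≤ n) {y : ZMod n → ZMod n × ZMod n}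
    (hy : Injective y) (hy0 : y 0 = 0) (hadj : ∀ a b, ∃ k, y a - y b ∈ dir k) :
    (∃ j, ∀ a, y a ∈ dir j) ∨ ∀ j, ∃ a, y a = (2 : ZMod n) • dirVec j := by
  have : NeZero n := ⟨by omega⟩
  have hne : ∀ {a}, a ≠ 0 → y a ≠ 0 := fun ha h => ha (hy (h.trans hy0.symm))
  choose d hd using fun a => by simpa [hy0] using hadj a 0
  by_cases hcol : ∃ a b, a ≠ 0 ∧ b ≠ 0 ∧ a ≠ b ∧ d a = d b
  · obtain ⟨a, b, ha, hb, hab, hdab⟩ := hcol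
    exact Or.inl ⟨d a, fun c => mem_dir_of_sub_mem_dir (hd a) (hdab ▸ hd b) (hne ha) (hne hb)
      (hy.ne hab) ⟨_, hd c⟩ (hadj c a) (hadj c b)⟩
  push Not at hcol
  right
  let D : {a : ZMod n // a ≠ 0} → Fin 3 := fun a => d a
  have hD : Injective D := fun a b h => Subtype.ext (by_contra fun hab => hcol a b a.2 b.2 hab h)
  have hcard := Fintype.card_le_of_injective D hD
  obtain rfl : n = 4 := by simp at hcard; omega
  have hDbij := (Fintype.bijective_iff_injective_and_card D).mpr ⟨hD, rfl⟩
  let E := Equiv.ofBijective D hDbij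
  have hE : ∀ j, y (E.symm j) ∈ dir j := fun j => by
    simpa [show d (E.symm j) = j from E.apply_symm_apply j] using hd (E.symm j)
  obtain ⟨t, ht0, htt, ht⟩ :=
    exists_eq_smul_of_triangle hE (fun j => hne (E.symm j).2) (fun j k => hadj _ _)
  have ht2 : ∀ t : ZMod 4, t ≠ 0 → t + t = 0 → t = 2 := by decide
  exact fun j => ⟨E.symm j, ht2 t ht0 htt ▸ ht j⟩

def line (x : ZMod n × ZMod n) (i : Fin 3) : Set (ZMod n × ZMod n) := {z | z - x ∈ dir i}

@[simp] lemma mem_line {x z : ZMod n × ZMod n} {i : Fin 3} : z ∈ line x i ↔ z - x ∈ dir i :=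
  Iff.rfl

lemma line_eq_of_mem {x z : ZMod n × ZMod n} {i : Fin 3} (h : z ∈ line x i) :
    line z i = line x i := by
  ext w
  rw [mem_line, mem_line, ← sub_add_sub_cancel w z x, Submodule.add_mem_iff_left _ h]

lemma add_dirVec_mem_line (x : ZMod n × ZMod n) (i : Fin 3) : x + dirVec i ∈ line x i := by
  simpa using dirVec_mem_dir i

lemma mapsTo_line_iff {f : ZMod n × ZMod n → ZMod n × ZMod n} {x : ZMod n × ZMod n}
    {i j : Fin 3} :
    MapsTo f (line x i) (line (f x) j) ↔ ∀ a : ZMod n, f (x + a • dirVec i) - f x ∈ dir j := by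
  refine ⟨fun h a => h (by simpa using Submodule.smul_mem _ a (dirVec_mem_dir i)), ?_⟩
  intro h z hz
  obtain ⟨a, ha⟩ := mem_dir_iff.mp hz
  rw [show z = x + a • dirVec i by rw [ha]; abel]
  exact h a

lemma two_ne_zero_of_two_lt (hn : 2 < n) : (2 : ZMod n) ≠ 0 := by
  intro h
  have := Nat.le_of_dvd two_pos ((ZMod.natCast_eq_zero_iff 2 n).mp (by exact_mod_cast h))
  omega

/-- For `n = 4` a line through `x` could a priori go to the clique `e x + {0, 2 • dirVec j}`;
this is excluded because the image of a second line through `x` would meet it as well. -/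
lemma exists_mapsTo_line (hn : 4 ≤ n) (e : Gamma n ≃g Gamma n) (x : ZMod n × ZMod n)
    (i : Fin 3) : ∃ j, MapsTo e (line x i) (line (e x) j) := by
  have : NeZero n := ⟨by omega⟩
  simp only [mapsTo_line_iff]
  set y : Fin 3 → ZMod n → ZMod n × ZMod n := fun i a => e (x + a • dirVec i) - e x
  have hy : ∀ i, Injective (y i) := fun i a b h =>
    smul_dirVec_injective i (add_left_cancel (e.injective (sub_left_inj.mp h)))
  have hy0 : ∀ i, y i 0 = 0 := by simp [y]
  have hadj : ∀ i a b, ∃ k, y i a - y i b ∈ dir k := fun i a b => by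
    simp only [y, sub_sub_sub_cancel_right, exists_mem_dir_sub_iff]
    exact ⟨i, by simpa [← sub_smul] using Submodule.smul_mem _ (a - b) (dirVec_mem_dir i)⟩
  have hdich := fun i => forall_mem_dir_or_two_smul hn (hy i) (hy0 i) (hadj i)
  refine (hdich i).resolve_right fun hK => ?_
  obtain ⟨a', j, ha'⟩ : ∃ a' j, y (i + 1) a' = (2 : ZMod n) • dirVec j := by
    rcases hdich (i + 1) with ⟨j, hj⟩ | hK'
    · obtain ⟨a', ha'⟩ := exists_eq_smul_of_forall_mem_dir (hy _) hj 2
      exact ⟨a', j, ha'⟩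
    · obtain ⟨a', ha'⟩ := hK' 0
      exact ⟨a', 0, ha'⟩
  obtain ⟨a, ha⟩ := hK j
  have hcoll : a • dirVec i = a' • dirVec (i + 1) :=
    add_left_cancel (e.injective (sub_left_inj.mp (ha.trans ha'.symm)))
  have hi : i ≠ i + 1 := by fin_cases i <;> decide
  have h0 := eq_zero_of_mem_dir_of_mem_dir hi (Submodule.smul_mem _ a (dirVec_mem_dir i))
    (hcoll ▸ Submodule.smul_mem _ a' (dirVec_mem_dir (i + 1)))
  have h2 : (2 : ZMod n) • dirVec (n := n) j ≠ 0 := by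
    simpa using (smul_dirVec_injective (n := n) j).ne (two_ne_zero_of_two_lt (by omega))
  exact h2 (by simp [← ha, y, h0])

lemma eq_of_mapsTo_line [Nontrivial (ZMod n)] {f : ZMod n × ZMod n → ZMod n × ZMod n}
    (hf : Injective f) {x : ZMod n × ZMod n} {i j j' : Fin 3}
    (h : MapsTo f (line x i) (line (f x) j)) (h' : MapsTo f (line x i) (line (f x) j')) :
    j = j' := by
  by_contra hjj
  have := eq_zero_of_mem_dir_of_mem_dir hjj (h (add_dirVec_mem_line x i))
    (h' (add_dirVec_mem_line x i))
  rw [sub_eq_zero, hf.eq_iff, add_eq_left] at this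
  exact dirVec_ne_zero i this

lemma mapsTo_line_symm (hn : 4 ≤ n) (e : Gamma n ≃g Gamma n) {x : ZMod n × ZMod n}
    {i j : Fin 3} (h : MapsTo e (line x i) (line (e x) j)) :
    MapsTo e.symm (line (e x) j) (line x i) := by
  have : Fact (1 < n) := ⟨by omega⟩
  obtain ⟨k, hk⟩ := exists_mapsTo_line hn e.symm (e x) j
  rw [RelIso.symm_apply_apply] at hk
  obtain rfl : k = i := by
    have hx := hk (h (add_dirVec_mem_line x i))
    rw [RelIso.symm_apply_apply, mem_line, add_sub_cancel_left] at hx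
    by_contra hki
    exact dirVec_ne_zero i (eq_zero_of_mem_dir_of_mem_dir hki hx (dirVec_mem_dir i))
  exact hk

/-- Image lines of different directions would meet, and the preimage of their common point
would lie on both `line x i` and `line y i`, making them one line. -/
lemma mapsTo_line_of_mapsTo_line (hn : 4 ≤ n) (e : Gamma n ≃g Gamma n)
    {x y : ZMod n × ZMod n} {i j : Fin 3} (h : MapsTo e (line x i) (line (e x) j)) :
    MapsTo e (line y i) (line (e y) j) := by
  have : Fact (1 < n) := ⟨by omega⟩
  obtain ⟨j', h'⟩ := exists_mapsTo_line hn e y i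
  obtain rfl | hjj := eq_or_ne j j'
  · exact h'
  obtain ⟨p, hp, q, hq, hpq⟩ := exists_add_of_ne hjj (e y - e x)
  have hzx : e.symm (e x + p) ∈ line x i := mapsTo_line_symm hn e h (by simpa using hp)
  have hzy : e.symm (e x + p) ∈ line y i := mapsTo_line_symm hn e h'
    (by simpa [show e x + p - e y = -q by linear_combination hpq] using neg_mem hq)
  refine absurd (eq_of_mapsTo_line e.injective (x := e.symm (e x + p)) (i := i) ?_ ?_) hjj
  · rwa [line_eq_of_mem hzx, line_eq_of_mem (h hzx)]
  · rwa [line_eq_of_mem hzy, line_eq_of_mem (h' hzy)]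

lemma exists_perm_mapsTo_line (hn : 4 ≤ n) (e : Gamma n ≃g Gamma n) :
    ∃ σ : Equiv.Perm (Fin 3), ∀ x i, MapsTo e (line x i) (line (e x) (σ i)) := by
  have : Fact (1 < n) := ⟨by omega⟩
  choose σ hσ using exists_mapsTo_line hn e 0
  have hinj : Injective σ := fun i i' hii' => by
    have h : MapsTo e.symm (line (e 0) (σ i')) (line (e.symm (e 0)) i) := by
      simpa [hii'] using mapsTo_line_symm hn e (hσ i)
    have h' : MapsTo e.symm (line (e 0) (σ i')) (line (e.symm (e 0)) i') := by
      simpa using mapsTo_line_symm hn e (hσ i')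
    exact eq_of_mapsTo_line e.symm.injective h h'
  exact ⟨Equiv.ofBijective σ (Finite.injective_iff_bijective.mp hinj),
    fun x i => mapsTo_line_of_mapsTo_line hn e (hσ i)⟩

def dirPerm (σ : Equiv.Perm (Fin 3)) : (ZMod n × ZMod n) →ₗ[ZMod n] ZMod n × ZMod n :=
  (LinearMap.fst _ _ _).smulRight (dirVec (σ 0)) + (LinearMap.snd _ _ _).smulRight (dirVec (σ 1))

lemma dirPerm_apply (σ : Equiv.Perm (Fin 3)) (p : ZMod n × ZMod n) :
    dirPerm σ p = p.1 • dirVec (σ 0) + p.2 • dirVec (σ 1) :=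
  rfl

lemma sum_dirVec : ∑ i, dirVec (n := n) i = 0 := by
  simp [Fin.sum_univ_three, dirVec]

lemma dirPerm_dirVec (σ : Equiv.Perm (Fin 3)) (i : Fin 3) :
    dirPerm σ (dirVec (n := n) i) = dirVec (σ i) := by
  fin_cases i
  · simp [dirPerm_apply, dirVec]
  · simp [dirPerm_apply, dirVec]
  · have h := Equiv.sum_comp σ (dirVec (n := n))
    rw [sum_dirVec, Fin.sum_univ_three] at h
    show (-1 : ZMod n) • dirVec (n := n) (σ 0) + (-1 : ZMod n) • dirVec (σ 1) = dirVec (σ 2)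
    simp only [neg_one_smul]
    linear_combination -h

lemma dirPerm_mem_dir (σ : Equiv.Perm (Fin 3)) {i : Fin 3} {v : ZMod n × ZMod n}
    (hv : v ∈ dir i) : dirPerm σ v ∈ dir (σ i) := by
  obtain ⟨a, rfl⟩ := mem_dir_iff.mp hv
  rw [map_smul, dirPerm_dirVec]
  exact Submodule.smul_mem _ a (dirVec_mem_dir _)

lemma dirPerm_dirPerm (σ τ : Equiv.Perm (Fin 3)) (p : ZMod n × ZMod n) :
    dirPerm σ (dirPerm τ p) = dirPerm (σ * τ) p := by
  rw [dirPerm_apply τ, map_add, map_smul, map_smul, dirPerm_dirVec, dirPerm_dirVec,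
    dirPerm_apply]
  rfl

lemma dirPerm_one (p : ZMod n × ZMod n) : dirPerm 1 p = p := by
  ext <;> simp [dirPerm_apply, dirVec]

/-- A map fixing every parallel class is coordinatewise, `f (a, b) = (α a, α b)`; the
diagonal class makes `α` additive. -/
lemma exists_unit_eq_smul [NeZero n] {f : ZMod n × ZMod n → ZMod n × ZMod n}
    (hf : Injective f) (hf0 : f 0 = 0) (hdir : ∀ i x y, x - y ∈ dir i → f x - f y ∈ dir i) :
    ∃ u : (ZMod n)ˣ, ∀ p, f p = u • p := by
  set α : ZMod n → ZMod n := fun a => (f (a, 0)).1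
  have h₁ : ∀ a b, (f (a, b)).1 = α a := fun a b => by
    simpa [sub_eq_zero] using hdir 1 (a, b) (a, 0) (by simp)
  have h₂ : ∀ a b, (f (a, b)).2 = (f (0, b)).2 := fun a b => by
    simpa [sub_eq_zero] using hdir 0 (a, b) (0, b) (by simp)
  have h₃ : ∀ a b, α a - α (a - b) = (f (0, b)).2 := fun a b => by
    have := hdir 2 (a, b) (a - b, 0) (by simp)
    rwa [mem_dir_two, Prod.fst_sub, Prod.snd_sub, h₁, h₁, h₂, h₂ _ 0, Prod.mk_zero_zero, hf0,
      Prod.snd_zero, sub_zero] at this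
  have hα0 : α 0 = 0 := by simp [α, Prod.mk_zero_zero, hf0]
  have h₄ : ∀ b, (f (0, b)).2 = α b := fun b => by simpa [hα0] using (h₃ b b).symm
  have hadd : ∀ a b, α (a + b) = α a + α b := fun a b => by
    have := h₃ (a + b) b
    rw [add_sub_cancel_right, h₄] at this
    linear_combination this
  have hmul : ∀ a, α a = a * α 1 := fun a => by
    obtain ⟨k, rfl⟩ := ZMod.natCast_zmod_surjective a
    simpa [nsmul_eq_mul] using map_nsmul (AddMonoidHom.mk' α hadd) k 1
  have hsmul : ∀ p, f p = α 1 • p := fun ⟨a, b⟩ =>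
    Prod.ext (by rw [h₁, hmul a, mul_comm]; rfl) (by rw [h₂, h₄, hmul b, mul_comm]; rfl)
  have hunit : IsUnit (α 1) := by
    have hinj : Injective fun a : ZMod n => α 1 * a := fun a b h => by
      have := @hf (a, 0) (b, 0) (by simp [hsmul, h])
      simpa using this
    obtain ⟨a, ha⟩ := Finite.injective_iff_surjective.mp hinj 1
    exact IsUnit.of_mul_eq_one a ha
  exact ⟨hunit.unit, fun p => by rw [hsmul, Units.smul_def, hunit.unit_spec]⟩

lemma dirPerm_injective (σ : Equiv.Perm (Fin 3)) : Injective (dirPerm (n := n) σ) :=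
  fun p q h => by simpa [dirPerm_dirPerm, dirPerm_one] using congrArg (dirPerm σ⁻¹) h

lemma exists_mem_dir_smul_dirPerm_iff (u : (ZMod n)ˣ) (σ : Equiv.Perm (Fin 3))
    (v : ZMod n × ZMod n) : (∃ j, u • dirPerm σ v ∈ dir j) ↔ ∃ i, v ∈ dir i := by
  refine ⟨fun ⟨j, hj⟩ => ⟨σ⁻¹ j, ?_⟩, fun ⟨i, hi⟩ => ⟨σ i, ?_⟩⟩
  · simpa [dirPerm_dirPerm, dirPerm_one] using
      dirPerm_mem_dir σ⁻¹ ((Submodule.smul_mem_iff' _ u).mp hj)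
  · exact Submodule.smul_of_tower_mem _ u (dirPerm_mem_dir σ hi)

def affineAut (c : ZMod n × ZMod n) (u : (ZMod n)ˣ) (σ : Equiv.Perm (Fin 3)) :
    Gamma n ≃g Gamma n where
  toFun p := u • dirPerm σ p + c
  invFun q := dirPerm σ⁻¹ (u⁻¹ • (q - c))
  left_inv p := by simp [dirPerm_dirPerm, dirPerm_one]
  right_inv q := by simp [dirPerm_dirPerm, dirPerm_one]
  map_rel_iff' {x y} := by
    simp only [Equiv.coe_fn_mk, adj_iff, add_sub_add_right_eq_sub, ← smul_sub, ← map_sub,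
      exists_mem_dir_smul_dirPerm_iff, ne_eq, add_left_inj, smul_left_cancel_iff,
      (dirPerm_injective σ).eq_iff]

lemma affineAut_apply (c : ZMod n × ZMod n) (u : (ZMod n)ˣ) (σ : Equiv.Perm (Fin 3))
    (p : ZMod n × ZMod n) : affineAut c u σ p = u • dirPerm σ p + c :=
  rfl

lemma affineAut_injective [Nontrivial (ZMod n)] :
    Injective fun t : (ZMod n × ZMod n) × (ZMod n)ˣ × Equiv.Perm (Fin 3) =>
      affineAut t.1 t.2.1 t.2.2 := by
  rintro ⟨c, u, σ⟩ ⟨c', u', σ'⟩ h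
  have happ : ∀ p, affineAut c u σ p = affineAut c' u' σ' p := fun p => by simp only at h; rw [h]
  obtain rfl : c = c' := by simpa [affineAut_apply] using happ 0
  have hw : ∀ i, u • dirVec (σ i) = u' • dirVec (n := n) (σ' i) := fun i => by
    simpa [affineAut_apply, dirPerm_dirVec] using happ (dirVec i)
  have hσ : σ = σ' := Equiv.ext fun i => by
    by_contra hne
    refine dirVec_ne_zero (n := n) (σ i) ((smul_eq_zero_iff_eq u).mp ?_)
    refine eq_zero_of_mem_dir_of_mem_dir hne
      (Submodule.smul_of_tower_mem _ u (dirVec_mem_dir _)) ?_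
    rw [hw]
    exact Submodule.smul_of_tower_mem _ u' (dirVec_mem_dir _)
  subst hσ
  obtain rfl : u = u' :=
    Units.ext (smul_dirVec_injective (σ 0) (by simpa [Units.smul_def] using hw 0))
  rfl

lemma exists_affineAut_eq (hn : 4 ≤ n) (e : Gamma n ≃g Gamma n) :
    ∃ c u σ, affineAut c u σ = e := by
  have : NeZero n := ⟨by omega⟩
  obtain ⟨σ, hσ⟩ := exists_perm_mapsTo_line hn e
  set f := fun p => dirPerm σ⁻¹ (e p - e 0)
  have hef : ∀ p, e p - e 0 = dirPerm σ (f p) := fun p => by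
    simp [f, dirPerm_dirPerm, dirPerm_one]
  have hf : Injective f := fun p q h => e.injective (sub_left_inj.mp (dirPerm_injective _ h))
  have hdir : ∀ i x y, x - y ∈ dir i → f x - f y ∈ dir i := fun i x y h => by
    simpa [f] using dirPerm_mem_dir σ⁻¹ (hσ y i h)
  obtain ⟨u, hu⟩ := exists_unit_eq_smul hf (by simp [f]) hdir
  refine ⟨e 0, u, σ, RelIso.ext fun p => ?_⟩
  rw [affineAut_apply, ← LinearMap.map_smul_of_tower, ← hu, ← hef, sub_add_cancel]

end Gamma

/-- For `n ≥ 4`, `Aut(Γ(n))` has exactly `6·n²·φ(n)` elements. -/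
theorem Gamma_card_aut (n : ℕ) (hn : 4 ≤ n) :
    Nat.card (Gamma n ≃g Gamma n) = 6 * n ^ 2 * Nat.totient n := by
  have : NeZero n := ⟨by omega⟩
  have : Fact (1 < n) := ⟨by omega⟩
  have hbij : Function.Bijective
      fun t : (ZMod n × ZMod n) × (ZMod n)ˣ × Equiv.Perm (Fin 3) =>
        Gamma.affineAut t.1 t.2.1 t.2.2 := by
    refine ⟨Gamma.affineAut_injective, fun e => ?_⟩
    obtain ⟨c, u, σ, h⟩ := Gamma.exists_affineAut_eq hn e
    exact ⟨(c, u, σ), h⟩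
  rw [← Nat.card_eq_of_bijective _ hbij]
  simp [ZMod.card_units_eq_totient, Fintype.card_perm]
  ring
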